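/- arXiv:2002.09959 — 3 statements merged into one kernel-verified Lean document; each statement's English description precedes it below -/
import Mathlib

section
/- The Lie derivative of the tensor φ = η³⊗ξ₁ − η¹⊗ξ₃ along ξ₂ is given by L_{ξ₂}φ = −2 f_y (η¹⊗ξ₁ − η³⊗ξ₃); equivalently, for every smooth vector field X, [ξ₂, φ(X)] − φ([ξ₂, X]) = −2 f_y (η¹(X) ξ₁ − η³(X) ξ₃). In particular the tensor h = (1/2) L_{ξ₂}φ equals −f_y (η¹⊗ξ₁ − η³⊗ξ₃). -/
/-!
Concrete model of the geometry of a second order ODE  y'' = f(x, y, y')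
on Σ = ℝ³ with coordinates (x, y, p):

* a vector field is given by its components w.r.t. (∂x, ∂y, ∂p);
* a 1-form by its components w.r.t. (dx, dy, dp);
* a 2-form by its components w.r.t. (dy∧dp, dp∧dx, dx∧dy);
* a 3-form by its coefficient w.r.t. dx∧dy∧dp.
-/

noncomputable section

/-- Points of Σ = ℝ³ with coordinates (x, y, p). -/
abbrev Pt : Type := ℝ × ℝ × ℝ

/-- Componentwise dot product of triples. -/
def dot (a b : Pt) : ℝ := a.1 * b.1 + a.2.1 * b.2.1 + a.2.2 * b.2.2

/-- Componentwise cross product of triples. -/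
def cross (a b : Pt) : Pt :=
  (a.2.1 * b.2.2 - a.2.2 * b.2.1,
   a.2.2 * b.1 - a.1 * b.2.2,
   a.1 * b.2.1 - a.2.1 * b.1)

/-- Partial derivative ∂/∂x. -/
def pdx (F : Pt → ℝ) (q : Pt) : ℝ := fderiv ℝ F q (1, 0, 0)
/-- Partial derivative ∂/∂y. -/
def pdy (F : Pt → ℝ) (q : Pt) : ℝ := fderiv ℝ F q (0, 1, 0)
/-- Partial derivative ∂/∂p. -/
def pdp (F : Pt → ℝ) (q : Pt) : ℝ := fderiv ℝ F q (0, 0, 1)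

/-- A 1-form: components w.r.t. (dx, dy, dp). -/
abbrev Form1 : Type := Pt → Pt
/-- A 2-form: components w.r.t. (dy∧dp, dp∧dx, dx∧dy). -/
abbrev Form2 : Type := Pt → Pt
/-- A 3-form: coefficient w.r.t. dx∧dy∧dp. -/
abbrev Form3 : Type := Pt → ℝ
/-- A vector field: components w.r.t. (∂x, ∂y, ∂p). -/
abbrev VF : Type := Pt → Pt

/-- Smoothness (C^∞) of a real function on Σ. -/
def SmoothFn (F : Pt → ℝ) : Prop := ContDiff ℝ (⊤ : ℕ∞) F
/-- Smoothness (C^∞) of a vector field on Σ. -/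
def SmoothVF (X : VF) : Prop := ContDiff ℝ (⊤ : ℕ∞) X
/-- Smoothness (C^∞) of a 1-form on Σ. -/
def SmoothForm1 (ω : Form1) : Prop := ContDiff ℝ (⊤ : ℕ∞) ω

/-- Exterior derivative of a function. -/
def dFun (F : Pt → ℝ) : Form1 := fun q => (pdx F q, pdy F q, pdp F q)

/-- Exterior derivative of a 1-form (the "curl", in the bases above). -/
def d1 (ω : Form1) : Form2 := fun q =>
  (pdy (fun r => (ω r).2.2) q - pdp (fun r => (ω r).2.1) q,
   pdp (fun r => (ω r).1) q - pdx (fun r => (ω r).2.2) q,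
   pdx (fun r => (ω r).2.1) q - pdy (fun r => (ω r).1) q)

/-- Wedge product of two 1-forms. -/
def w11 (ω τ : Form1) : Form2 := fun q => cross (ω q) (τ q)

/-- Wedge product of a 1-form and a 2-form. -/
def w12 (ω : Form1) (σ : Form2) : Form3 := fun q => dot (ω q) (σ q)

/-- Evaluation of a 1-form on a vector field. -/
def ev1 (ω : Form1) (X : VF) : Pt → ℝ := fun q => dot (ω q) (X q)

/-- Evaluation of a 2-form on a pair of vector fields. -/
def ev2 (σ : Form2) (X Y : VF) : Pt → ℝ := fun q => dot (σ q) (cross (X q) (Y q))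

/-- Lie bracket of vector fields: [X,Y]^i = X^j ∂_j Y^i − Y^j ∂_j X^i. -/
def lie (X Y : VF) : VF := fun q => fderiv ℝ Y q (X q) - fderiv ℝ X q (Y q)

/-- Derivative of a function along a vector field: X(F). -/
def vderiv (X : VF) (F : Pt → ℝ) : Pt → ℝ := fun q => fderiv ℝ F q (X q)

/-- η¹ = (1/2) dx. -/
def η1 : Form1 := fun _ => (1/2, 0, 0)
/-- η² = (1/2)(dy − p dx). -/
def η2 : Form1 := fun q => (-q.2.2/2, 1/2, 0)
/-- η³ = (1/2)(dp − f dx). -/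
def η3 (f : Pt → ℝ) : Form1 := fun q => (-f q/2, 0, 1/2)

/-- ξ₁ = 2(∂x + p ∂y + f ∂p). -/
def ξ1 (f : Pt → ℝ) : VF := fun q => (2, 2 * q.2.2, 2 * f q)
/-- ξ₂ = 2 ∂y. -/
def ξ2 : VF := fun _ => (0, 2, 0)
/-- ξ₃ = 2 ∂p. -/
def ξ3 : VF := fun _ => (0, 0, 2)

/-- Pointwise value of the Riemannian metric g = η¹⊗η¹ + η²⊗η² + η³⊗η³. -/
def gVal (f : Pt → ℝ) (q : Pt) (v w : Pt) : ℝ :=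
  dot (η1 q) v * dot (η1 q) w + dot (η2 q) v * dot (η2 q) w +
    dot (η3 f q) v * dot (η3 f q) w

/-- The metric applied to vector fields. -/
def gMet (f : Pt → ℝ) (X Y : VF) : Pt → ℝ := fun q => gVal f q (X q) (Y q)

/-- The volume form vol_g = η¹ ∧ η² ∧ η³. -/
def volg (f : Pt → ℝ) : Form3 := w12 η1 (w11 η2 (η3 f))

/-- Pointwise action of the (1,1)-tensor φ = η³⊗ξ₁ − η¹⊗ξ₃. -/
def phiAt (f : Pt → ℝ) (q : Pt) (v : Pt) : Pt :=
  dot (η3 f q) v • ξ1 f q - dot (η1 q) v • ξ3 q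

/-- The tensor φ applied to a vector field. -/
def phi (f : Pt → ℝ) (X : VF) : VF := fun q => phiAt f q (X q)

/-- The Koszul expression, equal to 2·g(∇_X Y, Z) for the Levi-Civita connection ∇ of g. -/
def koszul (f : Pt → ℝ) (X Y Z : VF) : Pt → ℝ := fun q =>
  vderiv X (gMet f Y Z) q + vderiv Y (gMet f X Z) q - vderiv Z (gMet f X Y) q
    + gMet f (lie X Y) Z q - gMet f (lie X Z) Y q - gMet f (lie Y Z) X q

/-- The Levi-Civita connection of g, recovered from the Koszul formula through the
    g-orthonormal frame (ξ₁, ξ₂, ξ₃): ∇_X Y = Σ_k g(∇_X Y, ξ_k) ξ_k. -/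
def nabla (f : Pt → ℝ) (X Y : VF) : VF := fun q =>
  (koszul f X Y (ξ1 f) q / 2) • ξ1 f q + (koszul f X Y ξ2 q / 2) • ξ2 q
    + (koszul f X Y ξ3 q / 2) • ξ3 q

/-- The g-gradient of a function, through the g-orthonormal frame (ξ₁, ξ₂, ξ₃):
    ∇F = Σ_k (ξ_k F) ξ_k, the unique field with g(∇F, X) = dF(X). -/
def grad (f : Pt → ℝ) (F : Pt → ℝ) : VF := fun q =>
  vderiv (ξ1 f) F q • ξ1 f q + vderiv ξ2 F q • ξ2 q + vderiv ξ3 F q • ξ3 q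

/-- The cross product of g: the unique field with g(X ×_g Y, Z) = vol_g(X, Y, Z),
    recovered through the g-orthonormal frame (ξ₁, ξ₂, ξ₃). -/
def crossg (f : Pt → ℝ) (X Y : VF) : VF := fun q =>
  (volg f q * dot (cross (X q) (Y q)) (ξ1 f q)) • ξ1 f q
    + (volg f q * dot (cross (X q) (Y q)) (ξ2 q)) • ξ2 q
    + (volg f q * dot (cross (X q) (Y q)) (ξ3 q)) • ξ3 q

/-!
Because ξ₂ = 2∂_y has constant coefficients, [ξ₂, Y] is the directional derivative D_{ξ₂}Y, so by
the Leibniz rule [ξ₂, φX] − φ[ξ₂, X] = (D_{ξ₂}φ)X: only the coefficients of φ = η³⊗ξ₁ − η¹⊗ξ₃ are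
differentiated. Of these only η³ and ξ₁ depend on y, through f, with D_{ξ₂}η³ = −2f_y η¹ and
D_{ξ₂}ξ₁ = 2f_y ξ₃.
-/

lemma lie_const_left (v : Pt) (Y : VF) (q : Pt) : lie (fun _ => v) Y q = fderiv ℝ Y q v := by
  simp [lie]

lemma fderiv_apply_ξ2 (F : Pt → ℝ) (q : Pt) : fderiv ℝ F q (ξ2 q) = 2 * pdy F q := by
  have : ξ2 q = (2 : ℝ) • ((0, 1, 0) : Pt) := by simp [ξ2]
  rw [this, map_smul, pdy, smul_eq_mul]

@[simp] lemma dot_zero_left (b : Pt) : dot 0 b = 0 := by simp [dot]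

lemma dot_smul_left (c : ℝ) (a b : Pt) : dot (c • a) b = c * dot a b := by
  simp only [dot, Prod.smul_fst, Prod.smul_snd, smul_eq_mul]; ring

section

variable {f : Pt → ℝ} {q : Pt}

lemma DifferentiableAt.dot {ω X : Pt → Pt} (hω : DifferentiableAt ℝ ω q)
    (hX : DifferentiableAt ℝ X q) : DifferentiableAt ℝ (fun r => dot (ω r) (X r)) q := by
  unfold _root_.dot; fun_prop

lemma fderiv_dot_apply {ω X : Pt → Pt} (hω : DifferentiableAt ℝ ω q)
    (hX : DifferentiableAt ℝ X q) (w : Pt) :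
    fderiv ℝ (fun r => dot (ω r) (X r)) q w
      = dot (fderiv ℝ ω q w) (X q) + dot (ω q) (fderiv ℝ X q w) := by
  have hω' := hω.hasFDerivAt
  have hX' := hX.hasFDerivAt
  have h : HasFDerivAt (fun r => dot (ω r) (X r)) _ q :=
    ((hω'.fst.mul hX'.fst).add (hω'.snd.fst.mul hX'.snd.fst)).add (hω'.snd.snd.mul hX'.snd.snd)
  rw [h.fderiv]
  simp only [add_apply, smul_apply, ContinuousLinearMap.comp_apply, ContinuousLinearMap.coe_fst',
    ContinuousLinearMap.coe_snd', smul_eq_mul, dot]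
  ring

lemma fderiv_dot_smul_apply {ω X V : Pt → Pt} (hω : DifferentiableAt ℝ ω q)
    (hX : DifferentiableAt ℝ X q) (hV : DifferentiableAt ℝ V q) (w : Pt) :
    fderiv ℝ (fun r => dot (ω r) (X r) • V r) q w
      = (dot (fderiv ℝ ω q w) (X q) + dot (ω q) (fderiv ℝ X q w)) • V q
        + dot (ω q) (X q) • fderiv ℝ V q w := by
  rw [fderiv_fun_smul (hω.dot hX) hV]
  simp only [add_apply, smul_apply, ContinuousLinearMap.smulRight_apply, fderiv_dot_apply hω hX]
  module

lemma differentiableAt_η3 (hf : DifferentiableAt ℝ f q) : DifferentiableAt ℝ (η3 f) q := by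
  unfold η3; fun_prop

lemma differentiableAt_ξ1 (hf : DifferentiableAt ℝ f q) : DifferentiableAt ℝ (ξ1 f) q := by
  unfold ξ1; fun_prop

lemma fderiv_η1 : fderiv ℝ η1 q = 0 := fderiv_const_apply _

lemma fderiv_ξ3 : fderiv ℝ ξ3 q = 0 := fderiv_const_apply _

lemma fderiv_η3_apply (hf : DifferentiableAt ℝ f q) (w : Pt) :
    fderiv ℝ (η3 f) q w = (-fderiv ℝ f q w) • η1 q := by
  have hη3 : η3 f = fun r => (-1 / 2 * f r, (0 : ℝ), (1 / 2 : ℝ)) := by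
    funext r; simp only [η3]; ring_nf
  have h := (hf.hasFDerivAt.const_mul (-1 / 2)).prodMk
    ((hasFDerivAt_const (0 : ℝ) q).prodMk (hasFDerivAt_const (1 / 2 : ℝ) q))
  rw [hη3, h.fderiv]
  simp [η1, div_eq_mul_inv, mul_comm]

lemma fderiv_ξ1_apply (hf : DifferentiableAt ℝ f q) (w : Pt) :
    fderiv ℝ (ξ1 f) q w = w.2.2 • ξ2 q + fderiv ℝ f q w • ξ3 q := by
  have h : HasFDerivAt (ξ1 f) _ q :=
    (hasFDerivAt_const (2 : ℝ) q).prodMk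
      (((hasFDerivAt_id q).snd.snd.const_mul 2).prodMk (hf.hasFDerivAt.const_mul 2))
  rw [h.fderiv]
  simp [ξ2, ξ3, mul_comm]

lemma fderiv_phi_apply {X : VF} (hf : DifferentiableAt ℝ f q) (hX : DifferentiableAt ℝ X q)
    (w : Pt) :
    fderiv ℝ (phi f X) q w = phiAt f q (fderiv ℝ X q w)
      + dot (fderiv ℝ (η3 f) q w) (X q) • ξ1 f q + dot (η3 f q) (X q) • fderiv ℝ (ξ1 f) q w := by
  have hη3 := differentiableAt_η3 hf
  have hξ1 := differentiableAt_ξ1 hf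
  have hη1 : DifferentiableAt ℝ η1 q := differentiableAt_const _
  have hξ3 : DifferentiableAt ℝ ξ3 q := differentiableAt_const _
  have h₁ : DifferentiableAt ℝ (fun r => dot (η3 f r) (X r) • ξ1 f r) q := (hη3.dot hX).smul hξ1
  have h₂ : DifferentiableAt ℝ (fun r => dot (η1 r) (X r) • ξ3 r) q := (hη1.dot hX).smul hξ3
  change fderiv ℝ (fun r => dot (η3 f r) (X r) • ξ1 f r - dot (η1 r) (X r) • ξ3 r) q w = _
  rw [fderiv_fun_sub h₁ h₂, sub_apply,
    fderiv_dot_smul_apply hη3 hX hξ1, fderiv_dot_smul_apply hη1 hX hξ3, fderiv_η1, fderiv_ξ3]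
  simp only [phiAt, zero_apply, dot_zero_left, smul_zero]
  module

theorem lie_ξ2_phi_sub_phi_lie {X : VF} (hf : DifferentiableAt ℝ f q)
    (hX : DifferentiableAt ℝ X q) :
    lie ξ2 (phi f X) q - phi f (lie ξ2 X) q
      = (-2 * pdy f q) • (dot (η1 q) (X q) • ξ1 f q - dot (η3 f q) (X q) • ξ3 q) := by
  have hlie (Y : VF) : lie ξ2 Y q = fderiv ℝ Y q (ξ2 q) := lie_const_left _ _ _
  change lie ξ2 (phi f X) q - phiAt f q (lie ξ2 X q) = _
  rw [hlie, hlie, fderiv_phi_apply hf hX, fderiv_η3_apply hf, fderiv_ξ1_apply hf, fderiv_apply_ξ2]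
  have hξ2p : (ξ2 q).2.2 = 0 := rfl
  simp only [phiAt, dot_smul_left, hξ2p, zero_smul, zero_add]
  module

end

/-- the Lie derivative of φ along ξ₂ is L_{ξ₂}φ = −2 f_y (η¹⊗ξ₁ − η³⊗ξ₃):
for every smooth vector field X, [ξ₂, φX] − φ[ξ₂, X] = −2 f_y (η¹(X) ξ₁ − η³(X) ξ₃);
in particular h = (1/2) L_{ξ₂}φ = −f_y (η¹⊗ξ₁ − η³⊗ξ₃). -/
theorem lie_derivative_phi (f : Pt → ℝ) (hf : ContDiff ℝ (⊤ : ℕ∞) f) :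
    (∀ X : VF, SmoothVF X → ∀ q,
      lie ξ2 (phi f X) q - phi f (lie ξ2 X) q
        = (-2 * pdy f q) • (dot (η1 q) (X q) • ξ1 f q - dot (η3 f q) (X q) • ξ3 q)) ∧
    (∀ X : VF, SmoothVF X → ∀ q,
      (1 / 2 : ℝ) • (lie ξ2 (phi f X) q - phi f (lie ξ2 X) q)
        = (-(pdy f q)) • (dot (η1 q) (X q) • ξ1 f q - dot (η3 f q) (X q) • ξ3 q)) := by
  have lie_derivative (X : VF) (hX : SmoothVF X) (q : Pt) :=
    lie_ξ2_phi_sub_phi_lie (hf.differentiable (by simp) q) (hX.differentiable (by simp) q)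
  refine ⟨lie_derivative, fun X hX q => ?_⟩
  rw [lie_derivative X hX q, smul_smul]
  congr 1
  ring
end
end

section
/- The 1-form η³ satisfies η³ ∧ dη³ = 2 f_y vol_g. Consequently η³ satisfies the Jacobi identity η³ ∧ dη³ = 0 (i.e. η³ is a Poisson 1-form, equivalently the bi-vector Ω = ξ₁∧ξ₂ with ι_Ω vol_g = η³ is a Poisson structure) if and only if f_y vanishes identically on Σ. -/
/-!
Concrete model of the geometry of a second order ODE  y'' = f(x, y, y')
on Σ = ℝ³ with coordinates (x, y, p):

* a vector field is given by its components w.r.t. (∂x, ∂y, ∂p);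
* a 1-form by its components w.r.t. (dx, dy, dp);
* a 2-form by its components w.r.t. (dy∧dp, dp∧dx, dx∧dy);
* a 3-form by its coefficient w.r.t. dx∧dy∧dp.
-/

noncomputable section

/-!
Only the first component of η³ = (−f/2, 0, 1/2) varies, so dη³ = −(1/2) df ∧ dx and
η³ ∧ dη³ = (1/4) f_y dx∧dy∧dp, while vol_g = (1/8) dx∧dy∧dp.
-/

section PartialDerivatives

variable (F : Pt → ℝ) (c : ℝ) (q : Pt)

lemma pdx_const : pdx (fun _ => c) q = 0 := by simp [pdx]

lemma pdy_const : pdy (fun _ => c) q = 0 := by simp [pdy]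

lemma pdp_const : pdp (fun _ => c) q = 0 := by simp [pdp]

lemma pdy_const_smul : pdy (c • F) q = c * pdy F q := by
  simp [pdy, fderiv_const_smul_field]

lemma pdp_const_smul : pdp (c • F) q = c * pdp F q := by
  simp [pdp, fderiv_const_smul_field]

end PartialDerivatives

section EtaThree

variable (f : Pt → ℝ) (q : Pt)

lemma d1_η3 : d1 (η3 f) q = (0, -pdp f q / 2, pdy f q / 2) := by
  have hfirst : (fun r => (η3 f r).1) = (-(1 / 2) : ℝ) • f := by
    ext r; simp only [η3, Pi.smul_apply, smul_eq_mul]; ring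
  simp only [d1, hfirst, pdy_const_smul, pdp_const_smul]
  simp only [η3, pdx_const, pdy_const, pdp_const]
  ext <;> simp only <;> ring

lemma η3_wedge_d1_η3 : w12 (η3 f) (d1 (η3 f)) q = pdy f q / 4 := by
  rw [w12, d1_η3]; simp only [η3, dot]; ring

lemma volg_apply : volg f q = 1 / 8 := by
  simp only [volg, w12, w11, η1, η2, η3, dot, cross]; ring

lemma volg_smul_cross_ξ1_ξ2 : volg f q • cross (ξ1 f q) (ξ2 q) = η3 f q := by
  rw [volg_apply]
  ext <;> simp only [ξ1, ξ2, η3, cross, Prod.smul_mk, smul_eq_mul] <;> ring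

end EtaThree

theorem jacobi_identity_eta3_general (f : Pt → ℝ) :
    (∀ q, w12 (η3 f) (d1 (η3 f)) q = 2 * pdy f q * volg f q) ∧
    (∀ q, volg f q • cross (ξ1 f q) (ξ2 q) = η3 f q) ∧
    ((∀ q, w12 (η3 f) (d1 (η3 f)) q = 0) ↔ (∀ q, pdy f q = 0)) := by
  refine ⟨fun q => ?_, volg_smul_cross_ξ1_ξ2 f, ?_⟩
  · rw [η3_wedge_d1_η3, volg_apply]; ring
  · simp only [η3_wedge_d1_η3, div_eq_zero_iff, four_ne_zero, or_false]

/-- η³ ∧ dη³ = 2 f_y vol_g; moreover the bi-vector Ω = ξ₁∧ξ₂ satisfies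
ι_Ω vol_g = η³, and η³ is a Poisson 1-form (η³ ∧ dη³ = 0, equivalently Ω is a Poisson
structure) iff f_y vanishes identically on Σ. -/
theorem jacobi_identity_eta3 (f : Pt → ℝ) (hf : ContDiff ℝ (⊤ : ℕ∞) f) :
    (∀ q, w12 (η3 f) (d1 (η3 f)) q = 2 * pdy f q * volg f q) ∧
    (∀ q, volg f q • cross (ξ1 f q) (ξ2 q) = η3 f q) ∧
    ((∀ q, w12 (η3 f) (d1 (η3 f)) q = 0) ↔ (∀ q, pdy f q = 0)) :=
  jacobi_identity_eta3_general f
end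
end

section
/- Assume f_y ≡ 0. For the coframe (ϖ¹, ϖ²) = (η¹, η³) of the plane bundle D = ker η² spanned by ξ₁ and ξ₃, the connection form ω¹₂ = −2 f_p η³ satisfies the structure equations dϖ¹ = −ω¹₂ ∧ ϖ² and dϖ² = ω¹₂ ∧ ϖ¹, and its curvature is Ω¹₂ = d(ω¹₂) = −4 ∂_p( f_x + f f_p ) η¹ ∧ η³. -/
/-!
Concrete model of the geometry of a second order ODE  y'' = f(x, y, y')
on Σ = ℝ³ with coordinates (x, y, p):

* a vector field is given by its components w.r.t. (∂x, ∂y, ∂p);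
* a 1-form by its components w.r.t. (dx, dy, dp);
* a 2-form by its components w.r.t. (dy∧dp, dp∧dx, dx∧dy);
* a 3-form by its coefficient w.r.t. dx∧dy∧dp.
-/

noncomputable section

/-!
Since `f_y ≡ 0` and mixed partials commute, `d(f_p) = f_px dx + f_pp dp` has no `dy`-component.
The first structure equation holds because `dη¹ = 0` and `η³ ∧ η³ = 0`; the second because
`dη³ = −df ∧ η¹`, of which only `−f_p dp ∧ η¹` survives. The curvature then follows from the
Leibniz rule `d(g η³) = dg ∧ η³ + g dη³` with `g = −2 f_p`.
-/

section SecondDerivative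

variable {E F : Type*} [NormedAddCommGroup E] [NormedSpace ℝ E]
  [NormedAddCommGroup F] [NormedSpace ℝ F] {f : E → F}

theorem ContDiff.differentiable_fderiv_apply (hf : ContDiff ℝ 2 f) (v : E) :
    Differentiable ℝ (fun x => fderiv ℝ f x v) :=
  ((hf.fderiv_right (m := 1) le_rfl).clm_apply contDiff_const).differentiable one_ne_zero

theorem ContDiffAt.fderiv_fderiv_apply_comm {x : E} (hf : ContDiffAt ℝ 2 f x) (v w : E) :
    fderiv ℝ (fun y => fderiv ℝ f y v) x w = fderiv ℝ (fun y => fderiv ℝ f y w) x v := by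
  have hd : DifferentiableAt ℝ (fderiv ℝ f) x :=
    (hf.fderiv_right (m := 1) le_rfl).differentiableAt one_ne_zero
  have hflip : ∀ u, fderiv ℝ (fun y => fderiv ℝ f y u) x = (fderiv ℝ (fderiv ℝ f) x).flip u := by
    intro u
    simp [fderiv_clm_apply hd (differentiableAt_const u)]
  simp only [hflip, ContinuousLinearMap.flip_apply]
  exact (hf.isSymmSndFDerivAt (by simp [minSmoothness_of_isRCLikeNormedField])).eq w v

end SecondDerivative

theorem pdx_pdp_comm {F : Pt → ℝ} (hF : ContDiff ℝ 2 F) (q : Pt) :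
    pdx (pdp F) q = pdp (pdx F) q :=
  hF.contDiffAt.fderiv_fderiv_apply_comm _ _

theorem pdy_pdp_eq_zero {F : Pt → ℝ} (hF : ContDiff ℝ 2 F) (hy : ∀ q, pdy F q = 0) (q : Pt) :
    pdy (pdp F) q = 0 := by
  have hswap : pdy (pdp F) q = pdp (pdy F) q := hF.contDiffAt.fderiv_fderiv_apply_comm _ _
  simp [hswap, funext hy, pdp]

theorem d1_const (c q : Pt) : d1 (fun _ => c) q = 0 := by
  ext <;> simp [d1, pdx, pdy, pdp]

theorem w11_self (ω : Form1) (q : Pt) : w11 ω ω q = 0 := by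
  ext <;> simp only [w11, cross, Prod.fst_zero, Prod.snd_zero] <;> ring

theorem w11_smul_left (g : Pt → ℝ) (ω τ : Form1) (q : Pt) :
    w11 (fun r => g r • ω r) τ q = g q • w11 ω τ q := by
  ext <;> simp only [w11, cross, Prod.smul_fst, Prod.smul_snd, smul_eq_mul] <;> ring

theorem d1_smul {g : Pt → ℝ} {ω : Form1} {q : Pt} (hg : DifferentiableAt ℝ g q)
    (hω : DifferentiableAt ℝ ω q) :
    d1 (fun r => g r • ω r) q = w11 (dFun g) ω q + g q • d1 ω q := by
  have h1 : DifferentiableAt ℝ (fun r => (ω r).1) q := hω.fst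
  have h2 : DifferentiableAt ℝ (fun r => (ω r).2.1) q := hω.snd.fst
  have h3 : DifferentiableAt ℝ (fun r => (ω r).2.2) q := hω.snd.snd
  simp only [d1, pdx, pdy, pdp, Prod.smul_fst, Prod.smul_snd, smul_eq_mul,
    fderiv_fun_mul hg h1, fderiv_fun_mul hg h2, fderiv_fun_mul hg h3]
  ext <;> simp [w11, cross, dFun, pdx, pdy, pdp] <;> ring

theorem d1_η3_s16 {f : Pt → ℝ} {q : Pt} (hf : DifferentiableAt ℝ f q) :
    d1 (η3 f) q = -w11 (dFun f) η1 q := by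
  have h1 : fderiv ℝ (fun r => (η3 f r).1) q = (-1 / 2 : ℝ) • fderiv ℝ f q := by
    rw [← fderiv_const_mul hf]
    congr 1
    funext r
    simp only [η3]
    ring
  have h2 : (fun r => (η3 f r).2.1) = fun _ => 0 := rfl
  have h3 : (fun r => (η3 f r).2.2) = fun _ => 1 / 2 := rfl
  ext <;> simp [d1, pdx, pdy, pdp, h1, h2, h3, η1, w11, cross, dFun] <;> ring

theorem dFun_pdp_of_pdy_eq_zero {F : Pt → ℝ} (hF : ContDiff ℝ 2 F) (hy : ∀ q, pdy F q = 0)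
    (q : Pt) : dFun (pdp F) q = (pdp (pdx F) q, 0, pdp (pdp F) q) := by
  simp only [dFun, pdx_pdp_comm hF, pdy_pdp_eq_zero hF hy]

theorem dFun_const_mul {g : Pt → ℝ} {q : Pt} (c : ℝ) (hg : DifferentiableAt ℝ g q) :
    dFun (fun r => c * g r) q = c • dFun g q := by
  simp [dFun, pdx, pdy, pdp, fderiv_const_mul hg]

theorem pdp_add_mul {F G H : Pt → ℝ} {q : Pt} (hF : DifferentiableAt ℝ F q)
    (hG : DifferentiableAt ℝ G q) (hH : DifferentiableAt ℝ H q) :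
    pdp (fun r => F r + G r * H r) q = pdp F q + pdp G q * H q + G q * pdp H q := by
  rw [pdp, fderiv_fun_add hF (hG.fun_mul hH), fderiv_fun_mul hG hH]
  simp only [pdp, add_apply, smul_apply, smul_eq_mul]
  ring

/-- for f_y ≡ 0, the coframe (ϖ¹, ϖ²) = (η¹, η³) of the plane bundle
D = ker η² and the connection form ω¹₂ = −2 f_p η³ satisfy dϖ¹ = −ω¹₂ ∧ ϖ² and
dϖ² = ω¹₂ ∧ ϖ¹, with curvature Ω¹₂ = dω¹₂ = −4 ∂_p(f_x + f f_p) η¹ ∧ η³. -/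
theorem connection_on_contact_distribution (f : Pt → ℝ) (hf : ContDiff ℝ (⊤ : ℕ∞) f)
    (hy : ∀ q, pdy f q = 0) :
    (∀ q, d1 η1 q = -(w11 (fun r => (-(2 * pdp f r)) • η3 f r) (η3 f) q)) ∧
    (∀ q, d1 (η3 f) q = w11 (fun r => (-(2 * pdp f r)) • η3 f r) η1 q) ∧
    (∀ q, d1 (fun r => (-(2 * pdp f r)) • η3 f r) q
      = (-4 * pdp (fun r => pdx f r + f r * pdp f r) q) • w11 η1 (η3 f) q) := by
  have hf2 : ContDiff ℝ 2 f := hf.of_le (WithTop.coe_le_coe.2 le_top)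
  have hfd : Differentiable ℝ f := hf2.differentiable two_ne_zero
  have hfx : Differentiable ℝ (pdx f) := hf2.differentiable_fderiv_apply _
  have hfp : Differentiable ℝ (pdp f) := hf2.differentiable_fderiv_apply _
  have hη3 : Differentiable ℝ (η3 f) := by unfold η3; fun_prop
  refine ⟨fun q => ?_, fun q => ?_, fun q => ?_⟩
  · rw [w11_smul_left, w11_self, smul_zero, neg_zero]
    exact d1_const _ q
  · rw [d1_η3_s16 (hfd q), w11_smul_left]
    ext <;> simp [w11, cross, dFun, η1, η3, hy q]
    ring
  · simp only [← neg_mul]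
    rw [d1_smul ((hfp q).const_mul _) (hη3 q), d1_η3_s16 (hfd q)]
    simp only [w11]
    rw [dFun_const_mul _ (hfp q),
      dFun_pdp_of_pdy_eq_zero hf2 hy, pdp_add_mul (hfx q) (hfd q) (hfp q)]
    ext <;> simp [cross, dFun, η1, η3, hy q]
    ring
end
end
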